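/- For every 𝒯-category X, the presheaf 𝒯-category X̂ is cocomplete; more precisely, the 𝒯-functor y_X^{-1}: (X̂)^ → X̂ (restriction along the Yoneda functor, ψ ↦ ψ∘(y_X)_*) satisfies y_X^{-1} · y_{X̂} = 1_{X̂} and is left adjoint to y_{X̂}. -/

import Mathlib

/-!
Write `⌊α⌋ = T_ξ α · m°` for the `V`-relation `T X ⇸ T Y` underlying a `𝒯`-relation
`α : X ⇸ Y`. Kleisli convolution and extension both factor through it:
`(β ∘ α)(𝔵, z) = ⋁_𝔶 ⌊α⌋(𝔵, 𝔶) ⊗ β(𝔶, z)` and `(φ ⟜ ψ)(𝔷, y) = ⋀_𝔵 hom(⌊ψ⌋(𝔵, 𝔷), φ(𝔵, y))`.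
The (BC) conditions on `T` and `m` give `⌊β ∘ α⌋ = ⌊β⌋ · ⌊α⌋`, hence Kleisli convolution is
associative and `φ ⟜ (β ∘ α) = (φ ⟜ α) ⟜ β`.

The structure of `X̂` is itself an extension: for any map `f : Z → X̂` with mate
`f♭(𝔵, z) = f z 𝔵` we have `X̂(T f 𝔷, φ) = (φ ⟜ f♭)(𝔷)`. For `f = y_X` the mate is `a`, and
`φ ⟜ a = φ` is the Yoneda lemma `X̂(T y_X 𝔵, φ) = φ 𝔵`, giving `y_X⁻¹ · y_{X̂} = 1`. The
`ψ`-weighted colimit of `h : A → X̂` is `z ↦ ψ(-, z) ∘ h♭`: its mate is `ψ ∘ h♭`, so its `g_*`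
is `(- ⟜ h♭) ⟜ ψ = h_* ⟜ ψ`. Finally `Ψ ≤ y_{X̂} (y_X⁻¹ Ψ)` because, by the Yoneda lemma,
evaluation `𝔵 ↦ φ 𝔵` is `X̂(T y_X 𝔵, φ)`, and `Ψ ∘ X̂ ≤ Ψ`.
-/

universe u

namespace Paper

/-- A strict topological theory `𝒯 = (𝕋, V, ξ)`: a commutative unital quantale `V`
(a complete lattice with a commutative monoid structure whose multiplication preserves
suprema in each variable, with `⊥ < k`), a `Set`-monad `𝕋 = (T, e, m)` such that `T`
sends pullbacks to weak pullbacks and the naturality squares of `m` are weak pullbacks,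
and a `𝕋`-algebra structure `ξ : T V → V` for which `⊗` and `k` are `𝕋`-algebra
homomorphisms and `ξ_X := ξ ∘ T(-)` is a (monotone) natural transformation
`P_V → P_V T`. -/
structure TopTheory (V : Type u) [CompleteLattice V] (T : Type u → Type u) where
  tens : V → V → V
  unit : V
  tens_comm : ∀ u v : V, tens u v = tens v u
  tens_assoc : ∀ u v w : V, tens (tens u v) w = tens u (tens v w)
  unit_tens : ∀ v : V, tens unit v = v
  tens_sSup : ∀ (u : V) (S : Set V), tens u (sSup S) = ⨆ v ∈ S, tens u v
  bot_lt_unit : (⊥ : V) < unit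
  map : ∀ {X Y : Type u}, (X → Y) → T X → T Y
  map_id : ∀ {X : Type u}, map (id : X → X) = id
  map_comp : ∀ {X Y Z : Type u} (g : Y → Z) (f : X → Y) (𝔵 : T X),
    map (g ∘ f) 𝔵 = map g (map f 𝔵)
  e : ∀ {X : Type u}, X → T X
  m : ∀ {X : Type u}, T (T X) → T X
  e_nat : ∀ {X Y : Type u} (f : X → Y) (x : X), map f (e x) = e (f x)
  m_nat : ∀ {X Y : Type u} (f : X → Y) (𝔛 : T (T X)), map f (m 𝔛) = m (map (map f) 𝔛)
  m_e : ∀ {X : Type u} (𝔵 : T X), m (e 𝔵) = 𝔵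
  m_map_e : ∀ {X : Type u} (𝔵 : T X), m (map e 𝔵) = 𝔵
  m_assoc : ∀ {X : Type u} (𝔜 : T (T (T X))), m (m 𝔜) = m (map m 𝔜)
  /-- (BC): `T` sends pullbacks to weak pullbacks. -/
  map_bc : ∀ {X Y Z : Type u} (f : X → Z) (g : Y → Z) (𝔵 : T X) (𝔶 : T Y),
    map f 𝔵 = map g 𝔶 →
    ∃ 𝔴 : T {p : X × Y // f p.1 = g p.2},
      map (fun p => p.1.1) 𝔴 = 𝔵 ∧ map (fun p => p.1.2) 𝔴 = 𝔶
  /-- (BC): every naturality square of `m` is a weak pullback. -/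
  m_bc : ∀ {X Y : Type u} (f : X → Y) (𝔜 : T (T Y)) (𝔵 : T X),
    m 𝔜 = map f 𝔵 → ∃ 𝔛 : T (T X), map (map f) 𝔛 = 𝔜 ∧ m 𝔛 = 𝔵
  xi : T V → V
  xi_e : ∀ v : V, xi (e v) = v
  xi_m : ∀ 𝔙 : T (T V), xi (m 𝔙) = xi (map xi 𝔙)
  /-- `k : 1 → V` is a `𝕋`-algebra homomorphism. -/
  xi_unit : ∀ {X : Type u} (𝔵 : T X), xi (map (fun _ => unit) 𝔵) = unit
  /-- `⊗ : V × V → V` is a `𝕋`-algebra homomorphism. -/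
  xi_tens : ∀ 𝔴 : T (V × V),
    xi (map (fun p => tens p.1 p.2) 𝔴) = tens (xi (map Prod.fst 𝔴)) (xi (map Prod.snd 𝔴))
  /-- each component `ξ_X : V^X → V^{T X}` is monotone. -/
  xi_mono : ∀ {X : Type u} (φ φ' : X → V), (∀ x, φ x ≤ φ' x) →
    ∀ 𝔵 : T X, xi (map φ 𝔵) ≤ xi (map φ' 𝔵)
  /-- `ξ_X` is a natural transformation `P_V → P_V T`. -/
  xi_nat : ∀ {X Y : Type u} (f : X → Y) (φ : X → V) (𝔶 : T Y),
    (⨆ 𝔵 : {𝔵 : T X // map f 𝔵 = 𝔶}, xi (map φ 𝔵.1)) =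
      xi (map (fun y => ⨆ x : {x : X // f x = y}, φ x.1) 𝔶)

namespace TopTheory

variable {V : Type u} [CompleteLattice V] {T : Type u → Type u}

/-- The internal hom of the quantale: `u ⊗ (-) ⊣ hom (u, -)`. -/
def ihom (𝒯 : TopTheory V T) (u w : V) : V := sSup {z | 𝒯.tens u z ≤ w}

/-- The extension `T_ξ` of `T : Set → Set` to `V`-relations. -/
def Txi (𝒯 : TopTheory V T) {X Y : Type u} (r : X → Y → V) (𝔵 : T X) (𝔶 : T Y) : V :=
  ⨆ 𝔴 : {w : T (X × Y) // 𝒯.map Prod.fst w = 𝔵 ∧ 𝒯.map Prod.snd w = 𝔶},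
    𝒯.xi (𝒯.map (fun p => r p.1 p.2) 𝔴.1)

/-- Kleisli convolution `β ∘ α = β · T_ξ α · m_X°` of `𝒯`-relations
`α : X ⇸ Y` and `β : Y ⇸ Z`. -/
def kleisli (𝒯 : TopTheory V T) {X Y Z : Type u}
    (β : T Y → Z → V) (α : T X → Y → V) (𝔵 : T X) (z : Z) : V :=
  ⨆ 𝔛 : {𝔛 : T (T X) // 𝒯.m 𝔛 = 𝔵}, ⨆ 𝔶 : T Y, 𝒯.tens (𝒯.Txi α 𝔛.1 𝔶) (β 𝔶 z)

/-- The `𝒯`-relation `e_X° : X ⇸ X`. -/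
def unitRel (𝒯 : TopTheory V T) (X : Type u) (𝔵 : T X) (x : X) : V :=
  ⨆ _ : 𝔵 = 𝒯.e x, 𝒯.unit

/-- A `𝒯`-category structure on `X`: a `𝒯`-relation `a : X ⇸ X` with
`e_X° ≤ a` and `a ∘ a ≤ a`. -/
structure TCatStr (𝒯 : TopTheory V T) (X : Type u) where
  rel : T X → X → V
  le_refl : ∀ x : X, 𝒯.unit ≤ rel (𝒯.e x) x
  comp : ∀ (𝔵 : T X) (x : X), 𝒯.kleisli rel rel 𝔵 x ≤ rel 𝔵 x

/-- The `𝒯`-module conditions `φ ∘ a ≤ φ` and `b ∘ φ ≤ φ` for a `𝒯`-relation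
`φ : X ⇸ Y` between (structures underlying) `𝒯`-categories `(X,a)` and `(Y,b)`. -/
def IsTModRel (𝒯 : TopTheory V T) {X Y : Type u}
    (a : T X → X → V) (b : T Y → Y → V) (φ : T X → Y → V) : Prop :=
  (∀ 𝔵 y, 𝒯.kleisli φ a 𝔵 y ≤ φ 𝔵 y) ∧ (∀ 𝔵 y, 𝒯.kleisli b φ 𝔵 y ≤ φ 𝔵 y)

variable {𝒯 : TopTheory V T}

/-- `f_* = b · T f`. -/
def modStar {X Y : Type u} (b : 𝒯.TCatStr Y) (f : X → Y) (𝔵 : T X) (y : Y) : V :=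
  b.rel (𝒯.map f 𝔵) y

/-- `f^* = f° · b`. -/
def modCostar {X Y : Type u} (b : 𝒯.TCatStr Y) (f : X → Y) (𝔶 : T Y) (x : X) : V :=
  b.rel 𝔶 (f x)

/-- The extension `φ ⟜ ψ` of `φ : X ⇸∘ Y` along `ψ : X ⇸∘ Z`, given by
`(φ ⟜ ψ)(𝔷,y) = ⋀_{𝔵 ∈ T X} hom((T_ξ ψ · m_X°)(𝔵,𝔷), φ(𝔵,y))`. -/
def extend (𝒯 : TopTheory V T) {X Y Z : Type u}
    (φ : T X → Y → V) (ψ : T X → Z → V) (𝔷 : T Z) (y : Y) : V :=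
  ⨅ 𝔵 : T X, 𝒯.ihom (⨆ 𝔛 : {𝔛 : T (T X) // 𝒯.m 𝔛 = 𝔵}, 𝒯.Txi ψ 𝔛.1 𝔷) (φ 𝔵 y)

/-- A `𝒯`-functor `f : (X,a) → (Y,b)`. -/
def IsTFunctor {X Y : Type u} (a : 𝒯.TCatStr X) (b : 𝒯.TCatStr Y) (f : X → Y) : Prop :=
  ∀ (𝔵 : T X) (x : X), a.rel 𝔵 x ≤ b.rel (𝒯.map f 𝔵) (f x)

/-- A fully faithful `𝒯`-functor. -/
def FullyFaithful {X Y : Type u} (a : 𝒯.TCatStr X) (b : 𝒯.TCatStr Y) (f : X → Y) : Prop :=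
  ∀ (𝔵 : T X) (x : X), a.rel 𝔵 x = b.rel (𝒯.map f 𝔵) (f x)

/-- The order `f ≤ g ⟺ f^* ≤ g^*` on `𝒯`-functors `X → (Y,b)`. -/
def funLE {X Y : Type u} (b : 𝒯.TCatStr Y) (f g : X → Y) : Prop :=
  ∀ (𝔶 : T Y) (x : X), b.rel 𝔶 (f x) ≤ b.rel 𝔶 (g x)

/-- Equivalence `f ≅ g ⟺ f^* = g^*` of `𝒯`-functors `X → (Y,b)`. -/
def FunEquiv {X Y : Type u} (b : 𝒯.TCatStr Y) (f g : X → Y) : Prop :=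
  ∀ (𝔶 : T Y) (x : X), b.rel 𝔶 (f x) = b.rel 𝔶 (g x)

/-- `f ⊣ g`:  `1_X ≤ g·f` and `f·g ≤ 1_Y`. -/
def IsAdjunction {X Y : Type u} (a : 𝒯.TCatStr X) (b : 𝒯.TCatStr Y)
    (f : X → Y) (g : Y → X) : Prop :=
  (∀ (𝔵 : T X) (x : X), a.rel 𝔵 x ≤ a.rel 𝔵 (g (f x))) ∧
    (∀ (𝔶 : T Y) (y : Y), b.rel 𝔶 (f (g y)) ≤ b.rel 𝔶 y)

/-- A left adjoint `𝒯`-functor. -/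
def IsLeftAdjoint {X Y : Type u} (a : 𝒯.TCatStr X) (b : 𝒯.TCatStr Y) (f : X → Y) : Prop :=
  IsTFunctor a b f ∧ ∃ g : Y → X, IsTFunctor b a g ∧ IsAdjunction a b f g

/-- L-separatedness: equivalent `𝒯`-functors into `X` are equal. -/
def Separated {X : Type u} (a : 𝒯.TCatStr X) : Prop :=
  ∀ (A : Type u) (as : 𝒯.TCatStr A) (f g : A → X),
    IsTFunctor as a f → IsTFunctor as a g → FunEquiv a f g → f = g

/-- Injectivity with respect to fully faithful `𝒯`-functors. -/
def Injective {X : Type u} (a : 𝒯.TCatStr X) : Prop :=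
  ∀ (A B : Type u) (as : 𝒯.TCatStr A) (bs : 𝒯.TCatStr B) (f : A → X) (i : A → B),
    IsTFunctor as a f → IsTFunctor as bs i → FullyFaithful as bs i →
      ∃ g : B → X, IsTFunctor bs a g ∧ FunEquiv a (g ∘ i) f

/-- `g : Z → X` is the `ψ`-weighted colimit of `h : A → X`, i.e. `g_* = h_* ⟜ ψ`. -/
def IsColimit {X A Z : Type u} (a : 𝒯.TCatStr X) (h : A → X) (ψ : T A → Z → V)
    (g : Z → X) : Prop :=
  ∀ (𝔷 : T Z) (x : X), modStar a g 𝔷 x = 𝒯.extend (modStar a h) ψ 𝔷 x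

/-- Cocompleteness: every weighted diagram has a colimit. -/
def Cocomplete {X : Type u} (a : 𝒯.TCatStr X) : Prop :=
  ∀ (A Z : Type u) (as : 𝒯.TCatStr A) (cs : 𝒯.TCatStr Z) (h : A → X),
    IsTFunctor as a h → ∀ ψ : T A → Z → V, 𝒯.IsTModRel as.rel cs.rel ψ →
      ∃ g : Z → X, IsTFunctor cs a g ∧ IsColimit a h ψ g

/-- Cocontinuity: preservation of all weighted colimits. -/
def Cocontinuous {X Y : Type u} (a : 𝒯.TCatStr X) (b : 𝒯.TCatStr Y) (f : X → Y) : Prop :=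
  ∀ (A Z : Type u) (as : 𝒯.TCatStr A) (cs : 𝒯.TCatStr Z) (h : A → X)
    (ψ : T A → Z → V) (g : Z → X),
    IsTFunctor as a h → 𝒯.IsTModRel as.rel cs.rel ψ → IsTFunctor cs a g →
      IsColimit a h ψ g → IsColimit b (f ∘ h) ψ (f ∘ g)

/-- A presheaf on `(X,a)`: a `𝒯`-module `X ⇸∘ G`, where `G = (1, e_1°)`. -/
def IsPresheaf {X : Type u} (a : 𝒯.TCatStr X) (ψ : T X → V) : Prop :=
  𝒯.IsTModRel a.rel (𝒯.unitRel PUnit) (fun 𝔵 _ => ψ 𝔵)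

/-- The underlying set of the presheaf `𝒯`-category `X̂`. -/
def Hat {X : Type u} (a : 𝒯.TCatStr X) : Type u := {ψ : T X → V // IsPresheaf a ψ}

/-- The `𝒯`-category structure `⟦-,-⟧` of `V^{|X|}`. -/
def powRel (𝒯 : TopTheory V T) (X : Type u) (𝔭 : T (T X → V)) (ψ : T X → V) : V :=
  ⨅ 𝔮 : {q : T ((T X) × (T X → V)) // 𝒯.map Prod.snd q = 𝔭},
    𝒯.ihom (𝒯.xi (𝒯.map (fun p => p.2 p.1) 𝔮.1)) (ψ (𝒯.m (𝒯.map Prod.fst 𝔮.1)))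

/-- `hs` is the `𝒯`-category structure on `X̂` inherited from `V^{|X|}`. -/
def IsHatStr {X : Type u} (a : 𝒯.TCatStr X) (hs : 𝒯.TCatStr (Hat a)) : Prop :=
  ∀ (𝔭 : T (Hat a)) (ψ : Hat a), hs.rel 𝔭 ψ = 𝒯.powRel X (𝒯.map Subtype.val 𝔭) ψ.1

/-- `y` is the Yoneda functor `X → X̂`, `y x = a(-,x)`. -/
def IsYoneda {X : Type u} (a : 𝒯.TCatStr X) (y : X → Hat a) : Prop :=
  ∀ (x : X) (𝔵 : T X), (y x).1 𝔵 = a.rel 𝔵 x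

/-- The underlying map `ψ ↦ ψ ∘ f^*` of `f̂ : X̂ → Ŷ`. -/
def hatMapRel {X Y : Type u} (b : 𝒯.TCatStr Y) (f : X → Y) (ψ : T X → V) (𝔶 : T Y) : V :=
  𝒯.kleisli (fun 𝔵 (_ : PUnit.{u + 1}) => ψ 𝔵) (modCostar b f) 𝔶 PUnit.unit

/-- `fh` is the `𝒯`-functor `f̂ : X̂ → Ŷ`, with underlying map `ψ ↦ ψ ∘ f^*`. -/
def IsHatMap {X Y : Type u} (a : 𝒯.TCatStr X) (b : 𝒯.TCatStr Y) (f : X → Y)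
    (fh : Hat a → Hat b) : Prop :=
  ∀ (ψ : Hat a) (𝔶 : T Y), (fh ψ).1 𝔶 = hatMapRel b f ψ.1 𝔶

/-- An inhabited `𝒯`-module: `k ≤ ⋀_y ⋁_𝔵 φ(𝔵,y)`. -/
def InhabitedMod (𝒯 : TopTheory V T) {X Y : Type u} (φ : T X → Y → V) : Prop :=
  𝒯.unit ≤ ⨅ y : Y, ⨆ 𝔵 : T X, φ 𝔵 y

/-- A dense `𝒯`-functor: `f_*` is inhabited. -/
def Dense {X Y : Type u} (b : 𝒯.TCatStr Y) (f : X → Y) : Prop :=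
  𝒯.InhabitedMod (modStar b f)

/-- The underlying set of `X⁺ = {ψ ∈ X̂ ∣ ψ inhabited}`. -/
def Plus {X : Type u} (a : 𝒯.TCatStr X) : Type u :=
  {ψ : Hat a // 𝒯.InhabitedMod (fun 𝔵 (_ : PUnit.{u + 1}) => ψ.1 𝔵)}

/-- `ps` is the `𝒯`-category structure on `X⁺` inherited from `X̂`. -/
def IsPlusStr {X : Type u} (a : 𝒯.TCatStr X) (hs : 𝒯.TCatStr (Hat a))
    (ps : 𝒯.TCatStr (Plus a)) : Prop :=
  ∀ (𝔭 : T (Plus a)) (ψ : Plus a), ps.rel 𝔭 ψ = hs.rel (𝒯.map Subtype.val 𝔭) ψ.1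

/-- Inhabited-cocompleteness: all colimits with inhabited weights exist. -/
def ICocomplete {X : Type u} (a : 𝒯.TCatStr X) : Prop :=
  ∀ (A Z : Type u) (as : 𝒯.TCatStr A) (cs : 𝒯.TCatStr Z) (h : A → X),
    IsTFunctor as a h → ∀ ψ : T A → Z → V, 𝒯.IsTModRel as.rel cs.rel ψ →
      𝒯.InhabitedMod ψ → ∃ g : Z → X, IsTFunctor cs a g ∧ IsColimit a h ψ g

/-- Inhabited-cocontinuity: preservation of all colimits with inhabited weights. -/
def ICocontinuous {X Y : Type u} (a : 𝒯.TCatStr X) (b : 𝒯.TCatStr Y) (f : X → Y) : Prop :=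
  ∀ (A Z : Type u) (as : 𝒯.TCatStr A) (cs : 𝒯.TCatStr Z) (h : A → X)
    (ψ : T A → Z → V) (g : Z → X),
    IsTFunctor as a h → 𝒯.IsTModRel as.rel cs.rel ψ → 𝒯.InhabitedMod ψ →
      IsTFunctor cs a g → IsColimit a h ψ g → IsColimit b (f ∘ h) ψ (f ∘ g)

section Quantale

variable (𝒯 : TopTheory V T)

lemma tens_iSup (u : V) {ι : Sort*} (f : ι → V) :
    𝒯.tens u (⨆ i, f i) = ⨆ i, 𝒯.tens u (f i) := by
  rw [← sSup_range, 𝒯.tens_sSup, iSup_range]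

lemma iSup_tens {ι : Sort*} (f : ι → V) (v : V) :
    𝒯.tens (⨆ i, f i) v = ⨆ i, 𝒯.tens (f i) v := by
  simp only [𝒯.tens_comm _ v, tens_iSup]

lemma tens_mono_right (u : V) {v v' : V} (h : v ≤ v') : 𝒯.tens u v ≤ 𝒯.tens u v' := by
  have h' := 𝒯.tens_sSup u {v, v'}
  rw [sSup_pair, sup_eq_right.mpr h] at h'
  exact h' ▸ le_iSup₂_of_le v (Set.mem_insert v _) le_rfl

lemma tens_le_tens {u u' v v' : V} (hu : u ≤ u') (hv : v ≤ v') :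
    𝒯.tens u v ≤ 𝒯.tens u' v' := by
  refine (𝒯.tens_mono_right u hv).trans ?_
  rw [𝒯.tens_comm u, 𝒯.tens_comm u']
  exact 𝒯.tens_mono_right v' hu

lemma le_ihom_iff {u z w : V} : z ≤ 𝒯.ihom u w ↔ 𝒯.tens u z ≤ w := by
  refine ⟨fun h => (𝒯.tens_mono_right u h).trans ?_, fun h => le_sSup h⟩
  rw [ihom, 𝒯.tens_sSup]
  exact iSup₂_le fun _ hz => hz

lemma tens_ihom_le (u w : V) : 𝒯.tens u (𝒯.ihom u w) ≤ w :=
  (𝒯.le_ihom_iff).mp le_rfl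

lemma ihom_mono_right (u : V) {w w' : V} (h : w ≤ w') : 𝒯.ihom u w ≤ 𝒯.ihom u w' :=
  (𝒯.le_ihom_iff).mpr ((𝒯.tens_ihom_le u w).trans h)

lemma iSup_tens_le_iff {ι : Sort*} (f : ι → V) (v c : V) :
    𝒯.tens (⨆ i, f i) v ≤ c ↔ ∀ i, 𝒯.tens (f i) v ≤ c := by
  rw [iSup_tens, iSup_le_iff]

lemma tens_iSup_le_iff {ι : Sort*} (u : V) (f : ι → V) (c : V) :
    𝒯.tens u (⨆ i, f i) ≤ c ↔ ∀ i, 𝒯.tens u (f i) ≤ c := by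
  rw [tens_iSup, iSup_le_iff]

end Quantale

section Monad

variable (𝒯 : TopTheory V T) {X Y : Type u}

lemma map_map {Z : Type u} (g : Y → Z) (f : X → Y) (𝔵 : T X) :
    𝒯.map g (𝒯.map f 𝔵) = 𝒯.map (fun x => g (f x)) 𝔵 :=
  (𝒯.map_comp g f 𝔵).symm

lemma map_id' (𝔵 : T X) : 𝒯.map (fun x => x) 𝔵 = 𝔵 :=
  congrFun 𝒯.map_id 𝔵

lemma xi_map_tens (f g : X → V) (𝔵 : T X) :
    𝒯.xi (𝒯.map (fun x => 𝒯.tens (f x) (g x)) 𝔵) =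
      𝒯.tens (𝒯.xi (𝒯.map f 𝔵)) (𝒯.xi (𝒯.map g 𝔵)) := by
  simpa only [map_map] using 𝒯.xi_tens (𝒯.map (fun x => (f x, g x)) 𝔵)

lemma xi_map_xi_map (π : Y → T X) (f : X → V) (𝔶 : T Y) :
    𝒯.xi (𝒯.map (fun y => 𝒯.xi (𝒯.map f (π y))) 𝔶) = 𝒯.xi (𝒯.map f (𝒯.m (𝒯.map π 𝔶))) := by
  rw [𝒯.m_nat, 𝒯.xi_m, map_map, map_map]

end Monad

section Txi

variable (𝒯 : TopTheory V T) {X Y Z W : Type u}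

lemma le_Txi (r : X → Y → V) {𝔵 : T X} {𝔶 : T Y} (𝔴 : T (X × Y))
    (h₁ : 𝒯.map Prod.fst 𝔴 = 𝔵) (h₂ : 𝒯.map Prod.snd 𝔴 = 𝔶) :
    𝒯.xi (𝒯.map (fun p => r p.1 p.2) 𝔴) ≤ 𝒯.Txi r 𝔵 𝔶 :=
  le_iSup_of_le ⟨𝔴, h₁, h₂⟩ le_rfl

lemma Txi_le (r : X → Y → V) {𝔵 : T X} {𝔶 : T Y} {c : V}
    (h : ∀ 𝔴 : T (X × Y), 𝒯.map Prod.fst 𝔴 = 𝔵 → 𝒯.map Prod.snd 𝔴 = 𝔶 →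
      𝒯.xi (𝒯.map (fun p => r p.1 p.2) 𝔴) ≤ c) :
    𝒯.Txi r 𝔵 𝔶 ≤ c :=
  iSup_le fun 𝔴 => h 𝔴.1 𝔴.2.1 𝔴.2.2

lemma xi_map_le_Txi (r : X → Y → V) (p : W → X) (q : W → Y) (𝔴 : T W) :
    𝒯.xi (𝒯.map (fun w => r (p w) (q w)) 𝔴) ≤ 𝒯.Txi r (𝒯.map p 𝔴) (𝒯.map q 𝔴) := by
  have h := 𝒯.le_Txi r (𝒯.map (fun w => (p w, q w)) 𝔴) (map_map ..) (map_map ..)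
  rwa [map_map] at h

lemma Txi_mono {r r' : X → Y → V} (h : ∀ x y, r x y ≤ r' x y) (𝔵 : T X) (𝔶 : T Y) :
    𝒯.Txi r 𝔵 𝔶 ≤ 𝒯.Txi r' 𝔵 𝔶 :=
  𝒯.Txi_le r fun 𝔴 h₁ h₂ =>
    (𝒯.xi_mono _ _ (fun p => h p.1 p.2) 𝔴).trans (𝒯.le_Txi r' 𝔴 h₁ h₂)

lemma Txi_comp_left_le (r : Y → Z → V) (f : X → Y) (𝔵 : T X) (𝔷 : T Z) :
    𝒯.Txi (fun x z => r (f x) z) 𝔵 𝔷 ≤ 𝒯.Txi r (𝒯.map f 𝔵) 𝔷 :=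
  𝒯.Txi_le _ fun 𝔴 h₁ h₂ => by
    simpa only [← h₁, ← h₂, map_map] using
      𝒯.xi_map_le_Txi r (fun p => f p.1) Prod.snd 𝔴

lemma Txi_comp_right (r : X → Y → V) (f : Z → Y) (𝔵 : T X) (𝔷 : T Z) :
    𝒯.Txi (fun x z => r x (f z)) 𝔵 𝔷 = 𝒯.Txi r 𝔵 (𝒯.map f 𝔷) := by
  apply le_antisymm
  · refine 𝒯.Txi_le _ fun 𝔴 h₁ h₂ => ?_
    simpa only [← h₁, ← h₂, map_map] using 𝒯.xi_map_le_Txi r Prod.fst (fun p => f p.2) 𝔴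
  · refine 𝒯.Txi_le _ fun 𝔳 h₁ h₂ => ?_
    obtain ⟨𝔴, hw₁, hw₂⟩ := 𝒯.map_bc Prod.snd f 𝔳 𝔷 h₂
    have h := 𝒯.xi_map_le_Txi (fun x z => r x (f z)) (fun w => w.1.1.1) (fun w => w.1.2) 𝔴
    have hv : 𝒯.map (fun w => r w.1.1.1 (f w.1.2)) 𝔴 = 𝒯.map (fun p => r p.1 p.2) 𝔳 := by
      rw [← hw₁, map_map]
      exact congrArg (𝒯.map · 𝔴) (funext fun w => by rw [← w.2])
    have hx : 𝒯.map (fun w => w.1.1.1) 𝔴 = 𝔵 := by rw [← h₁, ← hw₁, map_map]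
    rwa [hv, hw₂, hx] at h

end Txi

section Lift

variable (𝒯 : TopTheory V T) {X Y Z A W : Type u}

lemma Txi_eq_iSup_fiber (r : X → Y → V) (q : T X × T Y) :
    𝒯.Txi r q.1 q.2 = ⨆ 𝔴 : {𝔴 : T (X × Y) // (𝒯.map Prod.fst 𝔴, 𝒯.map Prod.snd 𝔴) = q},
      𝒯.xi (𝒯.map (fun p => r p.1 p.2) 𝔴.1) := by
  apply le_antisymm
  · exact iSup_le fun 𝔴 => le_iSup_of_le ⟨𝔴.1, Prod.ext 𝔴.2.1 𝔴.2.2⟩ le_rfl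
  · exact iSup_le fun 𝔴 =>
      le_iSup_of_le ⟨𝔴.1, congrArg Prod.fst 𝔴.2, congrArg Prod.snd 𝔴.2⟩ le_rfl

lemma Txi_Txi_le (r : X → Y → V) (𝔛 : T (T X)) (𝔜 : T (T Y)) :
    𝒯.Txi (𝒯.Txi r) 𝔛 𝔜 ≤ 𝒯.Txi r (𝒯.m 𝔛) (𝒯.m 𝔜) := by
  refine 𝒯.Txi_le _ fun 𝔳 h₁ h₂ => ?_
  rw [show (fun q : T X × T Y => 𝒯.Txi r q.1 q.2) = _ from funext (𝒯.Txi_eq_iSup_fiber r),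
    ← 𝒯.xi_nat (fun 𝔴 : T (X × Y) => (𝒯.map Prod.fst 𝔴, 𝒯.map Prod.snd 𝔴))
      (fun 𝔴 => 𝒯.xi (𝒯.map (fun p => r p.1 p.2) 𝔴))]
  refine iSup_le ?_
  rintro ⟨𝔚, h𝔚⟩
  dsimp only
  rw [xi_map_xi_map, map_id']
  refine 𝒯.le_Txi r _ ?_ ?_
  · rw [𝒯.m_nat, ← h₁, ← h𝔚, map_map]
  · rw [𝒯.m_nat, ← h₂, ← h𝔚, map_map]

/-- The `V`-relation `T_ξ α · m_X° : T X ⇸ T Y` of a `𝒯`-relation `α : X ⇸ Y`. -/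
def lift (α : T X → Y → V) (𝔵 : T X) (𝔶 : T Y) : V :=
  ⨆ 𝔛 : {𝔛 : T (T X) // 𝒯.m 𝔛 = 𝔵}, 𝒯.Txi α 𝔛.1 𝔶

lemma Txi_le_lift (α : T X → Y → V) (𝔛 : T (T X)) (𝔶 : T Y) :
    𝒯.Txi α 𝔛 𝔶 ≤ 𝒯.lift α (𝒯.m 𝔛) 𝔶 :=
  le_iSup_of_le ⟨𝔛, rfl⟩ le_rfl

lemma xi_le_lift (α : T X → Y → V) (𝔴 : T (T X × Y)) :
    𝒯.xi (𝒯.map (fun p => α p.1 p.2) 𝔴) ≤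
      𝒯.lift α (𝒯.m (𝒯.map Prod.fst 𝔴)) (𝒯.map Prod.snd 𝔴) :=
  (𝒯.le_Txi α 𝔴 rfl rfl).trans (𝒯.Txi_le_lift α _ _)

lemma lift_mono {α α' : T X → Y → V} (h : ∀ 𝔵 y, α 𝔵 y ≤ α' 𝔵 y) (𝔵 : T X) (𝔶 : T Y) :
    𝒯.lift α 𝔵 𝔶 ≤ 𝒯.lift α' 𝔵 𝔶 :=
  iSup_mono fun _ => 𝒯.Txi_mono h _ _

lemma lift_comp_right (α : T X → Y → V) (f : Z → Y) (𝔵 : T X) (𝔷 : T Z) :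
    𝒯.lift (fun 𝔵 z => α 𝔵 (f z)) 𝔵 𝔷 = 𝒯.lift α 𝔵 (𝒯.map f 𝔷) :=
  iSup_congr fun _ => 𝒯.Txi_comp_right α f _ _

lemma lift_comp_map_le (α : T Y → Z → V) (f : X → Y) (𝔵 : T X) (𝔷 : T Z) :
    𝒯.lift (fun 𝔵 z => α (𝒯.map f 𝔵) z) 𝔵 𝔷 ≤ 𝒯.lift α (𝒯.map f 𝔵) 𝔷 :=
  iSup_le fun ⟨𝔛, h𝔛⟩ => (𝒯.Txi_comp_left_le α (𝒯.map f) 𝔛 𝔷).trans <| by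
    rw [← h𝔛, 𝒯.m_nat]
    exact 𝒯.Txi_le_lift α _ 𝔷

lemma unit_le_lift (a : 𝒯.TCatStr X) (𝔵 : T X) : 𝒯.unit ≤ 𝒯.lift a.rel 𝔵 𝔵 :=
  calc 𝒯.unit = 𝒯.xi (𝒯.map (fun _ => 𝒯.unit) 𝔵) := (𝒯.xi_unit 𝔵).symm
    _ ≤ 𝒯.xi (𝒯.map (fun x => a.rel (𝒯.e x) x) 𝔵) := 𝒯.xi_mono _ _ a.le_refl 𝔵
    _ ≤ 𝒯.Txi a.rel (𝒯.map 𝒯.e 𝔵) (𝒯.map (fun x => x) 𝔵) := 𝒯.xi_map_le_Txi a.rel _ _ 𝔵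
    _ ≤ 𝒯.lift a.rel 𝔵 𝔵 := by
      simpa only [𝒯.m_map_e, map_id'] using 𝒯.Txi_le_lift a.rel (𝒯.map 𝒯.e 𝔵) 𝔵

end Lift

section Kleisli

variable (𝒯 : TopTheory V T) {X Y Z A W : Type u}

lemma kleisli_eq (β : T Y → Z → V) (α : T X → Y → V) (𝔵 : T X) (z : Z) :
    𝒯.kleisli β α 𝔵 z = ⨆ 𝔶, 𝒯.tens (𝒯.lift α 𝔵 𝔶) (β 𝔶 z) := by
  simp only [kleisli, lift, iSup_tens]
  exact iSup_comm

lemma kleisli_le_iff {β : T Y → Z → V} {α : T X → Y → V} {𝔵 : T X} {z : Z} {c : V} :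
    𝒯.kleisli β α 𝔵 z ≤ c ↔ ∀ 𝔶, 𝒯.tens (𝒯.lift α 𝔵 𝔶) (β 𝔶 z) ≤ c := by
  rw [kleisli_eq, iSup_le_iff]

lemma le_kleisli (β : T Y → Z → V) (α : T X → Y → V) (𝔵 : T X) (𝔶 : T Y) (z : Z) :
    𝒯.tens (𝒯.lift α 𝔵 𝔶) (β 𝔶 z) ≤ 𝒯.kleisli β α 𝔵 z :=
  (𝒯.kleisli_le_iff).1 le_rfl 𝔶

lemma kleisli_mono_left {β β' : T Y → Z → V} (h : ∀ 𝔶 z, β 𝔶 z ≤ β' 𝔶 z)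
    (α : T X → Y → V) (𝔵 : T X) (z : Z) : 𝒯.kleisli β α 𝔵 z ≤ 𝒯.kleisli β' α 𝔵 z :=
  (𝒯.kleisli_le_iff).2 fun 𝔶 => (𝒯.tens_le_tens le_rfl (h 𝔶 z)).trans (𝒯.le_kleisli _ _ _ _ _)

lemma kleisli_mono_right (β : T Y → Z → V) {α α' : T X → Y → V}
    (h : ∀ 𝔵 y, α 𝔵 y ≤ α' 𝔵 y) (𝔵 : T X) (z : Z) :
    𝒯.kleisli β α 𝔵 z ≤ 𝒯.kleisli β α' 𝔵 z :=
  (𝒯.kleisli_le_iff).2 fun 𝔶 =>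
    (𝒯.tens_le_tens (𝒯.lift_mono h 𝔵 𝔶) le_rfl).trans (𝒯.le_kleisli _ _ _ _ _)

lemma tens_Txi_le_lift_kleisli (r : T X → Y → V) (s : T Y → A → V)
    (𝔛 : T (T X)) (𝔜 : T (T Y)) (𝔞 : T A) :
    𝒯.tens (𝒯.Txi r 𝔛 (𝒯.m 𝔜)) (𝒯.Txi s 𝔜 𝔞) ≤ 𝒯.lift (𝒯.kleisli s r) (𝒯.m 𝔛) 𝔞 := by
  refine (𝒯.iSup_tens_le_iff _ _ _).2 ?_
  rintro ⟨𝔴, hw₁, hw₂⟩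
  refine (𝒯.tens_iSup_le_iff _ _ _).2 ?_
  rintro ⟨𝔳, hv₁, hv₂⟩
  dsimp only
  obtain ⟨𝔚, hW₁, hW₂⟩ := 𝒯.m_bc Prod.snd 𝔜 𝔴 hw₂.symm
  obtain ⟨𝔘, hU₁, hU₂⟩ := 𝒯.map_bc (𝒯.map Prod.snd) Prod.fst 𝔚 𝔳 (hW₁.trans hv₁.symm)
  have hX : 𝒯.m (𝒯.map (fun q => 𝒯.m (𝒯.map Prod.fst q.1.1)) 𝔘) = 𝒯.m 𝔛 := by
    rw [← hw₁, ← hW₂, 𝒯.m_nat, 𝒯.m_assoc, ← hU₁, map_map, map_map]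
  have hA : 𝒯.map (fun q => q.1.2.2) 𝔘 = 𝔞 := by rw [← hv₂, ← hU₂, map_map]
  have hpt : ∀ q : {q : T (T X × Y) × (T Y × A) // 𝒯.map Prod.snd q.1 = q.2.1},
      𝒯.tens (𝒯.xi (𝒯.map (fun p => r p.1 p.2) q.1.1)) (s q.1.2.1 q.1.2.2) ≤
        𝒯.kleisli s r (𝒯.m (𝒯.map Prod.fst q.1.1)) q.1.2.2 := fun q =>
    (𝒯.tens_le_tens (𝒯.xi_le_lift r q.1.1) le_rfl).trans (q.2 ▸ 𝒯.le_kleisli _ _ _ _ _)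
  calc _ = 𝒯.xi (𝒯.map (fun q => 𝒯.tens (𝒯.xi (𝒯.map (fun p => r p.1 p.2) q.1.1))
          (s q.1.2.1 q.1.2.2)) 𝔘) := by
        rw [xi_map_tens, xi_map_xi_map, hU₁, hW₂, ← hU₂, map_map]
    _ ≤ 𝒯.xi (𝒯.map (fun q => 𝒯.kleisli s r (𝒯.m (𝒯.map Prod.fst q.1.1)) q.1.2.2) 𝔘) :=
        𝒯.xi_mono _ _ hpt 𝔘
    _ ≤ _ := (𝒯.xi_map_le_Txi _ _ _ 𝔘).trans (hX ▸ hA ▸ 𝒯.Txi_le_lift _ _ _)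

lemma kleisli_eq_iSup_fiber (β : T Y → Z → V) (α : T X → Y → V) (p : T X × Z) :
    𝒯.kleisli β α p.1 p.2 = ⨆ w : {w : (T (T X) × T Y) × Z // (𝒯.m w.1.1, w.2) = p},
      𝒯.tens (𝒯.Txi α w.1.1.1 w.1.1.2) (β w.1.1.2 w.1.2) := by
  apply le_antisymm
  · exact iSup_le fun 𝔛 => iSup_le fun 𝔶 => le_iSup_of_le ⟨((𝔛.1, 𝔶), p.2), by rw [𝔛.2]⟩ le_rfl
  · refine iSup_le fun ⟨⟨⟨𝔛, 𝔶⟩, z⟩, hw⟩ => ?_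
    obtain rfl := hw
    exact le_iSup_of_le ⟨𝔛, rfl⟩ (le_iSup_of_le 𝔶 le_rfl)

lemma Txi_kleisli_le (r : T X → Y → V) (s : T Y → A → V) (𝔛 : T (T X)) (𝔞 : T A) :
    𝒯.Txi (𝒯.kleisli s r) 𝔛 𝔞 ≤ ⨆ 𝔶, 𝒯.tens (𝒯.lift r (𝒯.m 𝔛) 𝔶) (𝒯.lift s 𝔶 𝔞) := by
  refine 𝒯.Txi_le _ fun 𝔴 h₁ h₂ => ?_
  rw [show (fun p : T X × A => 𝒯.kleisli s r p.1 p.2) = _ from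
      funext (𝒯.kleisli_eq_iSup_fiber s r),
    ← 𝒯.xi_nat (fun w : (T (T X) × T Y) × A => (𝒯.m w.1.1, w.2))
      (fun w => 𝒯.tens (𝒯.Txi r w.1.1 w.1.2) (s w.1.2 w.2))]
  refine iSup_le ?_
  rintro ⟨E, hE⟩
  dsimp only
  have hX : 𝒯.m (𝒯.m (𝒯.map (fun w => w.1.1) E)) = 𝒯.m 𝔛 := by
    rw [← h₁, ← hE, map_map, 𝒯.m_assoc, map_map]
  have hA : 𝒯.map (fun w => w.2) E = 𝔞 := by rw [← h₂, ← hE, map_map]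
  rw [xi_map_tens]
  refine le_iSup_of_le (𝒯.m (𝒯.map (fun w => w.1.2) E)) (𝒯.tens_le_tens ?_ ?_)
  · calc _ ≤ 𝒯.Txi (𝒯.Txi r) (𝒯.map (fun w => w.1.1) E) (𝒯.map (fun w => w.1.2) E) :=
          𝒯.xi_map_le_Txi _ _ _ E
      _ ≤ _ := 𝒯.Txi_Txi_le r _ _
      _ ≤ _ := hX ▸ 𝒯.Txi_le_lift r _ _
  · exact (hA ▸ 𝒯.xi_map_le_Txi s _ _ E).trans (𝒯.Txi_le_lift s _ _)

theorem lift_kleisli (r : T X → Y → V) (s : T Y → A → V) (𝔵 : T X) (𝔞 : T A) :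
    𝒯.lift (𝒯.kleisli s r) 𝔵 𝔞 = ⨆ 𝔶, 𝒯.tens (𝒯.lift r 𝔵 𝔶) (𝒯.lift s 𝔶 𝔞) := by
  apply le_antisymm
  · exact iSup_le fun ⟨𝔛, h𝔛⟩ => h𝔛 ▸ 𝒯.Txi_kleisli_le r s 𝔛 𝔞
  · refine iSup_le fun 𝔶 => (𝒯.iSup_tens_le_iff _ _ _).2 fun ⟨𝔛, h𝔛⟩ =>
      (𝒯.tens_iSup_le_iff _ _ _).2 fun ⟨𝔜, h𝔜⟩ => ?_
    subst h𝔛 h𝔜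
    exact 𝒯.tens_Txi_le_lift_kleisli r s 𝔛 𝔜 𝔞

theorem kleisli_assoc (γ : T Z → W → V) (β : T Y → Z → V) (α : T X → Y → V)
    (𝔵 : T X) (w : W) :
    𝒯.kleisli γ (𝒯.kleisli β α) 𝔵 w = 𝒯.kleisli (𝒯.kleisli γ β) α 𝔵 w := by
  refine eq_of_forall_ge_iff fun c => ?_
  rw [kleisli_le_iff, kleisli_le_iff]
  simp only [lift_kleisli, kleisli_eq, iSup_tens_le_iff, tens_iSup_le_iff, 𝒯.tens_assoc]
  exact forall_comm

end Kleisli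

section Extension

variable (𝒯 : TopTheory V T) {X Y Z A : Type u}

lemma le_extend_iff {φ : T X → Y → V} {ψ : T X → Z → V} {𝔷 : T Z} {y : Y} {c : V} :
    c ≤ 𝒯.extend φ ψ 𝔷 y ↔ ∀ 𝔵, 𝒯.tens (𝒯.lift ψ 𝔵 𝔷) c ≤ φ 𝔵 y := by
  simp only [extend, le_iInf_iff, le_ihom_iff]
  rfl

lemma tens_lift_extend_le (φ : T X → Y → V) (ψ : T X → Z → V) (𝔵 : T X) (𝔷 : T Z) (y : Y) :
    𝒯.tens (𝒯.lift ψ 𝔵 𝔷) (𝒯.extend φ ψ 𝔷 y) ≤ φ 𝔵 y :=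
  (𝒯.le_extend_iff).1 le_rfl 𝔵

lemma extend_eq_iInf (φ : T X → Y → V) (ψ : T X → Z → V) (𝔷 : T Z) (y : Y) :
    𝒯.extend φ ψ 𝔷 y = ⨅ 𝔴 : {𝔴 : T (T X × Z) // 𝒯.map Prod.snd 𝔴 = 𝔷},
      𝒯.ihom (𝒯.xi (𝒯.map (fun p => ψ p.1 p.2) 𝔴.1)) (φ (𝒯.m (𝒯.map Prod.fst 𝔴.1)) y) := by
  refine eq_of_forall_le_iff fun c => ?_
  simp only [le_extend_iff, le_iInf_iff, le_ihom_iff, lift, Txi, iSup_tens_le_iff, Subtype.forall]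
  exact ⟨fun h 𝔴 h𝔴 => h _ _ rfl 𝔴 ⟨rfl, h𝔴⟩, fun h _ _ h𝔛 𝔴 h𝔴 => h𝔛 ▸ h𝔴.1 ▸ h 𝔴 h𝔴.2⟩

lemma extend_comp_right {W : Type u} (φ : T X → Y → V) (ψ : T X → Z → V) (f : W → Z)
    (𝔴 : T W) (y : Y) :
    𝒯.extend φ (fun 𝔵 w => ψ 𝔵 (f w)) 𝔴 y = 𝒯.extend φ ψ (𝒯.map f 𝔴) y :=
  eq_of_forall_le_iff fun c => by simp only [le_extend_iff, lift_comp_right]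

theorem extend_kleisli (φ : T X → Y → V) (r : T X → A → V) (s : T A → Z → V)
    (𝔷 : T Z) (y : Y) :
    𝒯.extend φ (𝒯.kleisli s r) 𝔷 y = 𝒯.extend (𝒯.extend φ r) s 𝔷 y := by
  refine eq_of_forall_le_iff fun c => ?_
  simp only [le_extend_iff, lift_kleisli, iSup_tens_le_iff, 𝒯.tens_assoc]
  exact forall_comm

theorem extend_rel_eq (a : 𝒯.TCatStr X) {φ : T X → Y → V}
    (hφ : ∀ 𝔵 y, 𝒯.kleisli φ a.rel 𝔵 y ≤ φ 𝔵 y) (𝔵 : T X) (y : Y) :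
    𝒯.extend φ a.rel 𝔵 y = φ 𝔵 y := by
  apply le_antisymm
  · calc 𝒯.extend φ a.rel 𝔵 y = 𝒯.tens 𝒯.unit (𝒯.extend φ a.rel 𝔵 y) := (𝒯.unit_tens _).symm
      _ ≤ 𝒯.tens (𝒯.lift a.rel 𝔵 𝔵) (𝒯.extend φ a.rel 𝔵 y) :=
          𝒯.tens_le_tens (𝒯.unit_le_lift a 𝔵) le_rfl
      _ ≤ φ 𝔵 y := 𝒯.tens_lift_extend_le φ a.rel 𝔵 𝔵 y
  · exact (𝒯.le_extend_iff).2 fun 𝔵' => (𝒯.le_kleisli φ a.rel 𝔵' 𝔵 y).trans (hφ 𝔵' y)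

end Extension

section Presheaf

variable {𝒯 : TopTheory V T} {X Y Z A : Type u}

lemma isPresheaf_apply {as : 𝒯.TCatStr A} {cs : 𝒯.TCatStr Z} {ψ : T A → Z → V}
    (hψ : 𝒯.IsTModRel as.rel cs.rel ψ) (z : Z) : IsPresheaf as (fun 𝔞 => ψ 𝔞 z) := by
  refine ⟨fun 𝔞 _ => hψ.1 𝔞 z, fun 𝔞 _ => (𝒯.kleisli_le_iff).2 fun 𝔟 => ?_⟩
  rw [unitRel, 𝒯.tens_iSup_le_iff]
  rintro rfl
  calc 𝒯.tens (𝒯.lift (fun 𝔞 _ => ψ 𝔞 z) 𝔞 (𝒯.e PUnit.unit)) 𝒯.unit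
      = 𝒯.tens (𝒯.lift ψ 𝔞 (𝒯.e z)) 𝒯.unit := by
        rw [← 𝒯.e_nat (fun _ => z), ← lift_comp_right]
    _ ≤ 𝒯.tens (𝒯.lift ψ 𝔞 (𝒯.e z)) (cs.rel (𝒯.e z) z) := 𝒯.tens_le_tens le_rfl (cs.le_refl z)
    _ ≤ ψ 𝔞 z := (𝒯.le_kleisli _ _ _ _ _).trans (hψ.2 𝔞 z)

lemma IsPresheaf.kleisli {b : 𝒯.TCatStr Y} {φ : T Y → V} (hφ : IsPresheaf b φ)
    {a : 𝒯.TCatStr X} {r : T X → Y → V} (hr : ∀ 𝔵 y, 𝒯.kleisli r a.rel 𝔵 y ≤ r 𝔵 y) :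
    IsPresheaf a (fun 𝔵 => 𝒯.kleisli (fun 𝔶 (_ : PUnit.{u + 1}) => φ 𝔶) r 𝔵 PUnit.unit) := by
  constructor
  · intro 𝔵 _
    rw [← kleisli_assoc]
    exact 𝒯.kleisli_mono_right _ hr 𝔵 _
  · intro 𝔵 _
    rw [kleisli_assoc]
    exact 𝒯.kleisli_mono_left (fun 𝔶 _ => hφ.2 𝔶 PUnit.unit) r 𝔵 _

end Presheaf

section Hat

variable {𝒯 : TopTheory V T} {X Z : Type u} {a : 𝒯.TCatStr X} {hs : 𝒯.TCatStr (Hat a)}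

lemma powRel_eq_extend (𝔭 : T (T X → V)) (φ : T X → V) :
    𝒯.powRel X 𝔭 φ =
      𝒯.extend (fun 𝔵 (_ : PUnit.{u + 1}) => φ 𝔵) (fun 𝔵 F => F 𝔵) 𝔭 PUnit.unit := by
  rw [extend_eq_iInf]
  rfl

theorem hatRel_map_eq_extend (hhs : IsHatStr a hs) (f : Z → Hat a) (𝔷 : T Z) (φ : Hat a) :
    hs.rel (𝒯.map f 𝔷) φ =
      𝒯.extend (fun 𝔵 (_ : PUnit.{u + 1}) => φ.1 𝔵) (fun 𝔵 z => (f z).1 𝔵) 𝔷 PUnit.unit := by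
  refine (hhs _ φ).trans ((congrArg (𝒯.powRel X · φ.1) (map_map ..)).trans ?_)
  rw [powRel_eq_extend, ← extend_comp_right]

lemma hatRel_eq_extend (hhs : IsHatStr a hs) (𝔭 : T (Hat a)) (φ : Hat a) :
    hs.rel 𝔭 φ =
      𝒯.extend (fun 𝔵 (_ : PUnit.{u + 1}) => φ.1 𝔵) (fun 𝔵 ψ => ψ.1 𝔵) 𝔭 PUnit.unit := by
  simpa only [map_id'] using hatRel_map_eq_extend hhs (fun ψ => ψ) 𝔭 φ

lemma hatRel_mono (hhs : IsHatStr a hs) (𝔭 : T (Hat a)) {φ φ' : Hat a}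
    (h : ∀ 𝔵, φ.1 𝔵 ≤ φ'.1 𝔵) : hs.rel 𝔭 φ ≤ hs.rel 𝔭 φ' := by
  rw [hhs, hhs]
  exact iInf_mono fun _ => 𝒯.ihom_mono_right _ (h _)

theorem hatRel_yoneda (hhs : IsHatStr a hs) {y : X → Hat a} (hy : IsYoneda a y)
    (𝔵 : T X) (φ : Hat a) : hs.rel (𝒯.map y 𝔵) φ = φ.1 𝔵 := by
  have hya : (fun 𝔵 x => (y x).1 𝔵) = a.rel := funext₂ fun 𝔵 x => hy x 𝔵
  rw [hatRel_map_eq_extend hhs, hya, 𝒯.extend_rel_eq a (fun 𝔵 _ => φ.2.1 𝔵 PUnit.unit)]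

lemma isTFunctor_of_kleisli_le (hhs : IsHatStr a hs) {cs : 𝒯.TCatStr Z} (f : Z → Hat a)
    (hf : ∀ 𝔵 z, 𝒯.kleisli cs.rel (fun 𝔵 z => (f z).1 𝔵) 𝔵 z ≤ (f z).1 𝔵) :
    IsTFunctor cs hs f := fun 𝔷 z => by
  rw [hatRel_map_eq_extend hhs, le_extend_iff]
  exact fun 𝔵 => (𝒯.le_kleisli _ _ 𝔵 𝔷 z).trans (hf 𝔵 z)

theorem cocomplete_of_isHatStr (hhs : IsHatStr a hs) : Cocomplete hs := by
  intro A Z as cs h _ ψ hψ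
  let g : Z → Hat a := fun z => ⟨fun 𝔵 => 𝒯.kleisli ψ (fun 𝔵 α => (h α).1 𝔵) 𝔵 z,
    (isPresheaf_apply hψ z).kleisli fun 𝔵 α => (h α).2.1 𝔵 PUnit.unit⟩
  refine ⟨g, isTFunctor_of_kleisli_le hhs g fun 𝔵 z => ?_, fun 𝔷 φ => ?_⟩
  · rw [kleisli_assoc]
    exact 𝒯.kleisli_mono_left hψ.2 _ 𝔵 z
  · rw [modStar, hatRel_map_eq_extend hhs, extend_kleisli]
    exact iInf_congr fun 𝔞 => by rw [modStar, hatRel_map_eq_extend hhs]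

end Hat

section YonedaInverse

variable {𝒯 : TopTheory V T} {X : Type u} {a : 𝒯.TCatStr X} {hs : 𝒯.TCatStr (Hat a)}
  {y : X → Hat a} {yinv : Hat hs → Hat a}

lemma le_hatRel_yinv (hhs : IsHatStr a hs) (hy : IsYoneda a y)
    (hyinv : ∀ (Ψ : Hat hs) (𝔵 : T X), (yinv Ψ).1 𝔵 = Ψ.1 (𝒯.map y 𝔵))
    (Ψ : Hat hs) (𝔯 : T (Hat a)) : Ψ.1 𝔯 ≤ hs.rel 𝔯 (yinv Ψ) := by
  rw [hatRel_eq_extend hhs, le_extend_iff]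
  intro 𝔵
  have hev : (fun 𝔵 (φ : Hat a) => φ.1 𝔵) = fun 𝔵 φ => hs.rel (𝒯.map y 𝔵) φ :=
    funext₂ fun 𝔵 φ => (hatRel_yoneda hhs hy 𝔵 φ).symm
  calc 𝒯.tens (𝒯.lift (fun 𝔵 (φ : Hat a) => φ.1 𝔵) 𝔵 𝔯) (Ψ.1 𝔯)
      ≤ 𝒯.tens (𝒯.lift hs.rel (𝒯.map y 𝔵) 𝔯) (Ψ.1 𝔯) :=
        𝒯.tens_le_tens (hev ▸ 𝒯.lift_comp_map_le hs.rel y 𝔵 𝔯) le_rfl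
    _ ≤ Ψ.1 (𝒯.map y 𝔵) := (𝒯.le_kleisli _ _ _ 𝔯 PUnit.unit).trans (Ψ.2.1 _ PUnit.unit)
    _ = (yinv Ψ).1 𝔵 := (hyinv Ψ 𝔵).symm

lemma isTFunctor_yinv (hhs : IsHatStr a hs) {hs2 : 𝒯.TCatStr (Hat hs)}
    (hhs2 : IsHatStr hs hs2)
    (hyinv : ∀ (Ψ : Hat hs) (𝔵 : T X), (yinv Ψ).1 𝔵 = Ψ.1 (𝒯.map y 𝔵)) :
    IsTFunctor hs2 hs yinv := fun 𝔓 Ψ => by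
  rw [hatRel_map_eq_extend hhs, le_extend_iff]
  intro 𝔵
  simp only [hyinv]
  calc 𝒯.tens (𝒯.lift (fun 𝔵 (Φ : Hat hs) => Φ.1 (𝒯.map y 𝔵)) 𝔵 𝔓) (hs2.rel 𝔓 Ψ)
      ≤ 𝒯.tens (𝒯.lift (fun 𝔯 (Φ : Hat hs) => Φ.1 𝔯) (𝒯.map y 𝔵) 𝔓)
          (𝒯.extend (fun 𝔯 (_ : PUnit.{u + 1}) => Ψ.1 𝔯) (fun 𝔯 Φ => Φ.1 𝔯) 𝔓 PUnit.unit) :=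
        𝒯.tens_le_tens (𝒯.lift_comp_map_le (fun 𝔯 (Φ : Hat hs) => Φ.1 𝔯) y 𝔵 𝔓) (hatRel_eq_extend hhs2 𝔓 Ψ).le
    _ ≤ Ψ.1 (𝒯.map y 𝔵) := 𝒯.tens_lift_extend_le _ _ _ 𝔓 PUnit.unit

end YonedaInverse

theorem statement3_general (𝒯 : TopTheory V T) {X : Type u} (a : 𝒯.TCatStr X)
    (hs : 𝒯.TCatStr (Hat a)) (hhs : IsHatStr a hs)
    (hs2 : 𝒯.TCatStr (Hat hs)) (hhs2 : IsHatStr hs hs2)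
    (y : X → Hat a) (hy : IsYoneda a y)
    (y' : Hat a → Hat hs) (hy' : IsYoneda hs y')
    (yinv : Hat hs → Hat a)
    (hyinv : ∀ (Ψ : Hat hs) (𝔵 : T X), (yinv Ψ).1 𝔵 = Ψ.1 (𝒯.map y 𝔵)) :
    Cocomplete hs ∧ (∀ Ψ : Hat a, yinv (y' Ψ) = Ψ) ∧
      IsTFunctor hs2 hs yinv ∧ IsAdjunction hs2 hs yinv y' := by
  have hsection : ∀ Ψ : Hat a, yinv (y' Ψ) = Ψ := fun Ψ =>
    Subtype.ext <| funext fun 𝔵 => by rw [hyinv, hy', hatRel_yoneda hhs hy]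
  refine ⟨cocomplete_of_isHatStr hhs, hsection, isTFunctor_yinv hhs hhs2 hyinv,
    fun 𝔓 Ψ => hatRel_mono hhs2 𝔓 fun 𝔯 => ?_, fun 𝔭 Ψ => by rw [hsection]⟩
  rw [hy']
  exact le_hatRel_yinv hhs hy hyinv Ψ 𝔯

/-- Theorem 2.6. For every `𝒯`-category `X`, the presheaf
`𝒯`-category `X̂` is cocomplete; more precisely, the `𝒯`-functor
`y_X⁻¹ : (X̂)^ → X̂`, `ψ ↦ ψ ∘ (y_X)_*`, satisfies `y_X⁻¹ · y_{X̂} = 1_{X̂}` and is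
left adjoint to `y_{X̂}`. -/
theorem statement3 (𝒯 : TopTheory V T) {X : Type u} (a : 𝒯.TCatStr X)
    (hs : 𝒯.TCatStr (Hat a)) (hhs : IsHatStr a hs)
    (hs2 : 𝒯.TCatStr (Hat hs)) (hhs2 : IsHatStr hs hs2)
    (y : X → Hat a) (hy : IsYoneda a y)
    (y' : Hat a → Hat hs) (hy' : IsYoneda hs y') (hy'f : IsTFunctor hs hs2 y')
    (yinv : Hat hs → Hat a)
    (hyinv : ∀ (Ψ : Hat hs) (𝔵 : T X), (yinv Ψ).1 𝔵 = Ψ.1 (𝒯.map y 𝔵)) :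
    Cocomplete hs ∧ (∀ Ψ : Hat a, yinv (y' Ψ) = Ψ) ∧
      IsTFunctor hs2 hs yinv ∧ IsAdjunction hs2 hs yinv y' :=
  statement3_general 𝒯 a hs hhs hs2 hhs2 y hy y' hy' yinv hyinv

end TopTheory

end Paper
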